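/- The set U(A) of all invertible elements of a unital alternative algebra A forms a Moufang loop with respect to the multiplication of A. -/

import Mathlib

noncomputable section

universe u v w

/-! ### Loop-theoretic notions.

A loop is given by a type with `Mul`, `One`, `Inv`; `IsMoufangLoop` states that these
operations make it a Moufang loop (a loop satisfying the Moufang identity; the axioms
below — unit laws, two-sided cancellation, two-sided inverses and the Moufang identity —
are equivalent to the usual definition of a Moufang loop). -/

/-- `M` with its `Mul`, `One`, `Inv` is a Moufang loop. -/
def IsMoufangLoop (M : Type u) [Mul M] [One M] [Inv M] : Prop :=
  (∀ a : M, 1 * a = a) ∧ (∀ a : M, a * 1 = a) ∧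
  (∀ a b c : M, a * b = a * c → b = c) ∧
  (∀ a b c : M, b * a = c * a → b = c) ∧
  (∀ a : M, a⁻¹ * a = 1) ∧ (∀ a : M, a * a⁻¹ = 1) ∧
  (∀ x y z : M, ((x * y) * x) * z = x * (y * (x * z)))

/-- A subloop of the loop `M`. -/
structure Subloop (M : Type u) [Mul M] [One M] [Inv M] where
  carrier : Set M
  one_mem : (1 : M) ∈ carrier
  mul_mem : ∀ {a b : M}, a ∈ carrier → b ∈ carrier → a * b ∈ carrier
  inv_mem : ∀ {a : M}, a ∈ carrier → a⁻¹ ∈ carrier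

/-- A subloop `N` is normal: `xN = Nx`, `(xN)y = x(Ny)` and `N(xy) = (Nx)y`. -/
def Subloop.IsNormal {M : Type u} [Mul M] [One M] [Inv M] (N : Subloop M) : Prop :=
  (∀ x : M, (fun n => x * n) '' N.carrier = (fun n => n * x) '' N.carrier) ∧
  (∀ x y : M, (fun n => (x * n) * y) '' N.carrier = (fun n => x * (n * y)) '' N.carrier) ∧
  (∀ x y : M, (fun n => n * (x * y)) '' N.carrier = (fun n => (n * x) * y) '' N.carrier)

/-- A loop is simple if it has no non-trivial proper normal subloops. -/
def IsSimpleLoop (M : Type u) [Mul M] [One M] [Inv M] : Prop :=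
  Nontrivial M ∧
    ∀ N : Subloop M, N.IsNormal → N.carrier = {(1 : M)} ∨ N.carrier = Set.univ

/-- Non-associativity of a multiplication. -/
def IsNonassociative (M : Type u) [Mul M] : Prop :=
  ¬ ∀ x y z : M, (x * y) * z = x * (y * z)

/-- Non-associativity of the multiplication restricted to a subset. -/
def IsNonassociativeOn {M : Type u} [Mul M] (H : Set M) : Prop :=
  ¬ ∀ x ∈ H, ∀ y ∈ H, ∀ z ∈ H, (x * y) * z = x * (y * z)

/-- The subloop generated by a subset `S` (as a set). -/
def subloopClosure {M : Type u} [Mul M] [One M] [Inv M] (S : Set M) : Set M :=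
  ⋂₀ {T : Set M | S ⊆ T ∧ (1 : M) ∈ T ∧ (∀ a ∈ T, ∀ b ∈ T, a * b ∈ T) ∧ ∀ a ∈ T, a⁻¹ ∈ T}

/-- The centre of a loop: all elements commuting and associating with all elements. -/
def loopCenter (M : Type u) [Mul M] : Set M :=
  {z : M | (∀ x : M, z * x = x * z) ∧ (∀ x y : M, (z * x) * y = z * (x * y)) ∧
    (∀ x y : M, (x * z) * y = x * (z * y)) ∧ ∀ x y : M, (x * y) * z = x * (y * z)}

/-- The set `U(A)` of (two-sided) invertible elements of `A`. -/
def invertibles (A : Type u) [Mul A] [One A] : Set A :=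
  {x : A | ∃ y : A, x * y = 1 ∧ y * x = 1}

/-- `N` is a normal subloop inside the loop given by the subset `Q` of `A`
(`xN = Nx`, `(xN)y = x(Ny)`, `N(xy) = (Nx)y` for `x, y ∈ Q`). -/
def IsNormalIn {A : Type u} [Mul A] (N Q : Set A) : Prop :=
  (∀ x ∈ Q, (fun n => x * n) '' N = (fun n => n * x) '' N) ∧
  (∀ x ∈ Q, ∀ y ∈ Q, (fun n => (x * n) * y) '' N = (fun n => x * (n * y)) '' N) ∧
  (∀ x ∈ Q, ∀ y ∈ Q, (fun n => n * (x * y)) '' N = (fun n => (n * x) * y) '' N)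

/-- An algebra (given by its multiplication) is alternative:
`x(xy) = (xx)y` and `(yx)x = y(xx)`. -/
def IsAlternative (A : Type u) [Mul A] : Prop :=
  ∀ x y : A, x * (x * y) = (x * x) * y ∧ (y * x) * x = y * (x * x)

/-! ### The matrix Cayley–Dickson (Zorn vector matrix) algebra -/

/-- The Zorn vector-matrix (matrix Cayley–Dickson) algebra over `F`:
matrices `(α₁, a₁₂; a₂₁, α₂)` with `α₁, α₂ ∈ F` and `a₁₂, a₂₁ ∈ F³`. -/
@[ext]
structure Zorn (F : Type u) where
  a1 : F
  a2 : F
  u : Fin 3 → F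
  v : Fin 3 → F

namespace Zorn

variable {F : Type u} [Field F]

/-- The dot product on `F³`. -/
def dot (x y : Fin 3 → F) : F := x 0 * y 0 + x 1 * y 1 + x 2 * y 2

/-- The cross product on `F³`. -/
def cross (x y : Fin 3 → F) : Fin 3 → F :=
  ![x 1 * y 2 - x 2 * y 1, x 2 * y 0 - x 0 * y 2, x 0 * y 1 - x 1 * y 0]

instance : Mul (Zorn F) :=
  ⟨fun x y =>
    ⟨x.a1 * y.a1 + dot x.u y.v,
     x.a2 * y.a2 + dot x.v y.u,
     fun i => x.a1 * y.u i + y.a2 * x.u i - cross x.v y.v i,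
     fun i => y.a1 * x.v i + x.a2 * y.v i + cross x.u y.u i⟩⟩

instance : One (Zorn F) := ⟨⟨1, 1, 0, 0⟩⟩
instance : Zero (Zorn F) := ⟨⟨0, 0, 0, 0⟩⟩
instance : Add (Zorn F) := ⟨fun x y => ⟨x.a1 + y.a1, x.a2 + y.a2, x.u + y.u, x.v + y.v⟩⟩
instance : Neg (Zorn F) := ⟨fun x => ⟨-x.a1, -x.a2, -x.u, -x.v⟩⟩
instance : Sub (Zorn F) := ⟨fun x y => x + -y⟩
instance : SMul F (Zorn F) := ⟨fun c x => ⟨c * x.a1, c * x.a2, c • x.u, c • x.v⟩⟩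

@[simp] theorem mul_a1 (x y : Zorn F) : (x * y).a1 = x.a1 * y.a1 + dot x.u y.v := rfl
@[simp] theorem mul_a2 (x y : Zorn F) : (x * y).a2 = x.a2 * y.a2 + dot x.v y.u := rfl
@[simp] theorem mul_u (x y : Zorn F) (i : Fin 3) :
    (x * y).u i = x.a1 * y.u i + y.a2 * x.u i - cross x.v y.v i := rfl
@[simp] theorem mul_v (x y : Zorn F) (i : Fin 3) :
    (x * y).v i = y.a1 * x.v i + x.a2 * y.v i + cross x.u y.u i := rfl
@[simp] theorem neg_a1 (x : Zorn F) : (-x).a1 = -x.a1 := rfl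
@[simp] theorem neg_a2 (x : Zorn F) : (-x).a2 = -x.a2 := rfl
@[simp] theorem neg_u (x : Zorn F) (i : Fin 3) : (-x).u i = -x.u i := rfl
@[simp] theorem neg_v (x : Zorn F) (i : Fin 3) : (-x).v i = -x.v i := rfl
@[simp] theorem one_a1 : (1 : Zorn F).a1 = 1 := rfl
@[simp] theorem one_a2 : (1 : Zorn F).a2 = 1 := rfl
@[simp] theorem one_u (i : Fin 3) : (1 : Zorn F).u i = 0 := rfl
@[simp] theorem one_v (i : Fin 3) : (1 : Zorn F).v i = 0 := rfl

/-- The norm of the Zorn algebra: `n(a) = α₁α₂ - ⟨a₁₂, a₂₁⟩`. -/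
def norm (x : Zorn F) : F := x.a1 * x.a2 - dot x.u x.v

/-- The trace of the Zorn algebra: `t(a) = α₁ + α₂`. -/
def trace (x : Zorn F) : F := x.a1 + x.a2

/-- The norm is multiplicative. -/
theorem norm_mul (x y : Zorn F) : norm (x * y) = norm x * norm y := by
  obtain ⟨a, b, u, v⟩ := x
  obtain ⟨c, d, w, z⟩ := y
  simp [norm, dot, cross]
  ring

@[simp] theorem norm_one : norm (1 : Zorn F) = 1 := by simp [norm, dot]

@[simp] theorem norm_neg (x : Zorn F) : norm (-x) = norm x := by
  simp [norm, dot]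

theorem neg_neg' (x : Zorn F) : -(-x) = x := by
  ext i <;> simp

theorem neg_mul' (x y : Zorn F) : (-x) * y = -(x * y) := by
  ext i <;> (try fin_cases i) <;> simp [dot, cross] <;> ring

theorem mul_neg' (x y : Zorn F) : x * (-y) = -(x * y) := by
  ext i <;> (try fin_cases i) <;> simp [dot, cross] <;> ring

/-- The conjugate `(α₂, -a₁₂; -a₂₁, α₁)` of an element of the Zorn algebra. -/
def conj (x : Zorn F) : Zorn F := ⟨x.a2, x.a1, -x.u, -x.v⟩

@[simp] theorem norm_conj (x : Zorn F) : norm (conj x) = norm x := by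
  simp [norm, conj, dot]; ring

theorem mul_conj (x : Zorn F) : x * conj x = norm x • 1 := by
  ext i <;> (try fin_cases i) <;> simp [conj, norm, dot, cross, HSMul.hSMul, SMul.smul] <;>
    ring_nf <;> exact (mul_zero (M₀ := F) _).symm

theorem conj_mul (x : Zorn F) : conj x * x = norm x • 1 := by
  ext i <;> (try fin_cases i) <;> simp [conj, norm, dot, cross, HSMul.hSMul, SMul.smul] <;>
    ring_nf <;> exact (mul_zero (M₀ := F) _).symm

/-- The matrix entries of the elements of a subset `H` of the Zorn algebra. -/
def entries (H : Set (Zorn F)) : Set F :=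
  {c : F | ∃ x ∈ H, c = x.a1 ∨ c = x.a2 ∨ (∃ i, c = x.u i) ∨ ∃ i, c = x.v i}

end Zorn

/-- The set `M₀(F)` of all elements of norm `1` of the Zorn algebra. -/
def M0set (F : Type u) [Field F] : Set (Zorn F) := {x : Zorn F | Zorn.norm x = 1}

/-- The Moufang loop `M₀(F)` of all elements of norm `1` of the Zorn algebra. -/
def M0 (F : Type u) [Field F] : Type u := {x : Zorn F // Zorn.norm x = 1}

namespace M0

variable {F : Type u} [Field F]

instance : Mul (M0 F) :=
  ⟨fun x y => ⟨x.1 * y.1, by rw [Zorn.norm_mul, x.2, y.2, one_mul]⟩⟩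
instance : One (M0 F) := ⟨⟨1, Zorn.norm_one⟩⟩
instance : Neg (M0 F) := ⟨fun x => ⟨-x.1, by rw [Zorn.norm_neg, x.2]⟩⟩
instance : Inv (M0 F) := ⟨fun x => ⟨Zorn.conj x.1, by rw [Zorn.norm_conj, x.2]⟩⟩

theorem neg_neg' (x : M0 F) : -(-x) = x := Subtype.ext (Zorn.neg_neg' x.1)
theorem neg_mul' (x y : M0 F) : (-x) * y = -(x * y) := Subtype.ext (Zorn.neg_mul' x.1 y.1)
theorem mul_neg' (x y : M0 F) : x * (-y) = -(x * y) := Subtype.ext (Zorn.mul_neg' x.1 y.1)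

theorem neg_conj (x : Zorn F) : Zorn.conj (-x) = -(Zorn.conj x) := by
  ext i <;> simp [Zorn.conj]

end M0

/-- The setoid on `M₀(F)` identifying `x` and `-x`; its classes are exactly the
cosets of the subloop `⟨-1⟩ = {1, -1}` generated by `-1`. -/
def mSetoid (F : Type u) [Field F] : Setoid (M0 F) where
  r x y := y = x ∨ y = -x
  iseqv := by
    constructor
    · exact fun x => Or.inl rfl
    · rintro x y (rfl | rfl)
      · exact Or.inl rfl
      · right; rw [M0.neg_neg']
    · rintro x y z (rfl | rfl) h <;> rcases h with rfl | rfl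
      · exact Or.inl rfl
      · exact Or.inr rfl
      · exact Or.inr rfl
      · left; rw [M0.neg_neg']

/-- The loop `M(F) = M₀(F)/⟨-1⟩`. -/
def Mloop (F : Type u) [Field F] : Type u := Quotient (mSetoid F)

namespace Mloop

variable {F : Type u} [Field F]

instance : Mul (Mloop F) :=
  ⟨Quotient.map₂ (· * ·) (by
    rintro x x' (rfl | rfl) y y' (rfl | rfl) <;> try dsimp only
    · exact Or.inl rfl
    · right; rw [M0.mul_neg']
    · right; rw [M0.neg_mul']
    · left; rw [M0.neg_mul', M0.mul_neg', M0.neg_neg'])⟩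

instance : One (Mloop F) := ⟨Quotient.mk _ 1⟩

instance : Inv (Mloop F) :=
  ⟨Quotient.map (·⁻¹) (by
    rintro x x' (rfl | rfl)
    · exact Or.inl rfl
    · right
      exact Subtype.ext (M0.neg_conj x.1))⟩

end Mloop
/-! ### Free Moufang loops and the alternative "loop algebra" -/

/-- `L` is a free Moufang loop (on some subset `X` of `L`). -/
def IsFreeMoufangLoop (L : Type v) [MulOneClass L] [Inv L] : Prop :=
  IsMoufangLoop L ∧
    ∃ X : Set L, ∀ (M : Type v) [MulOneClass M] [Inv M], IsMoufangLoop M →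
      ∀ f : X → M, ∃! φ : L → M,
        (∀ a b : L, φ (a * b) = φ a * φ b) ∧ ∀ x : X, φ x.1 = f x

/-- The associator `(x, y, z) = (xy)z - x(yz)` in an algebra. -/
def asc {A : Type u} [Mul A] [Sub A] (x y z : A) : A := x * y * z - x * (y * z)

section LoopAlgebra

variable (F : Type u) [Field F] (L : Type v) [MulOneClass L]

/-- The canonical embedding of the loop `L` into its loop algebra `FL`
(the free `F`-module on `L` with multiplication induced by that of `L`). -/
def embMA : L → MonoidAlgebra F L := fun g => MonoidAlgebra.single g 1

/-- The set `{(a,b,c) + (b,a,c), (a,b,c) + (a,c,b) | a b c ∈ L}` of skew-symmetrised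
associators of loop elements in the loop algebra. -/
def assocRelSet : Set (MonoidAlgebra F L) :=
  {x | ∃ a b c : L, x =
      asc (embMA F L a) (embMA F L b) (embMA F L c) +
        asc (embMA F L b) (embMA F L a) (embMA F L c)} ∪
  {x | ∃ a b c : L, x =
      asc (embMA F L a) (embMA F L b) (embMA F L c) +
        asc (embMA F L a) (embMA F L c) (embMA F L b)}

/-- The ideal `I` of the loop algebra generated by the skew-symmetrised associators. -/
def altIdeal : TwoSidedIdeal (MonoidAlgebra F L) := TwoSidedIdeal.span (assocRelSet F L)

/-- The alternative "loop algebra" `FL/I` (denoted `FL` in the paper). -/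
def LoopAlg : Type (max u v) := (altIdeal F L).ringCon.Quotient

noncomputable instance : NonAssocRing (LoopAlg F L) :=
  inferInstanceAs (NonAssocRing (altIdeal F L).ringCon.Quotient)

noncomputable instance : SMul F (LoopAlg F L) :=
  inferInstanceAs (SMul F (altIdeal F L).ringCon.Quotient)

instance : IsScalarTower F (LoopAlg F L) (LoopAlg F L) :=
  inferInstanceAs (IsScalarTower F (altIdeal F L).ringCon.Quotient
    (altIdeal F L).ringCon.Quotient)

/-- The canonical map from `L` to the "loop algebra" `FL/I`. -/
def embLA : L → LoopAlg F L :=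
  fun g => ((embMA F L g : MonoidAlgebra F L) : (altIdeal F L).ringCon.Quotient)

variable (Q : Type w) [MulOneClass Q] (p : L → Q)

/-- The ideal `ωH` of the "loop algebra" `FL` generated by the elements `1 - h`,
`h ∈ H`, where `H = ker p` for a presentation `p : L → Q` of `Q = L/H`. -/
def omegaH : TwoSidedIdeal (LoopAlg F L) :=
  TwoSidedIdeal.span {x : LoopAlg F L | ∃ h : L, p h = 1 ∧ x = 1 - embLA F L h}

/-- The alternative algebra `F Q̄ = FL/ωH`. -/
def FQbar : Type (max u v) := (omegaH F L Q p).ringCon.Quotient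

noncomputable instance : NonAssocRing (FQbar F L Q p) :=
  inferInstanceAs (NonAssocRing (omegaH F L Q p).ringCon.Quotient)

noncomputable instance : SMul F (FQbar F L Q p) :=
  inferInstanceAs (SMul F (omegaH F L Q p).ringCon.Quotient)

instance : IsScalarTower F (FQbar F L Q p) (FQbar F L Q p) :=
  inferInstanceAs (IsScalarTower F (omegaH F L Q p).ringCon.Quotient
    (omegaH F L Q p).ringCon.Quotient)

/-- The canonical map from `L` to `F Q̄ = FL/ωH`; the loop `Q̄ = L/K`,
`K = L ∩ (1 + ωH)`, is its range. -/
def embQbar : L → FQbar F L Q p :=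
  fun g => ((embLA F L g : LoopAlg F L) : (omegaH F L Q p).ringCon.Quotient)

/-- The ideal `S` of `F Q̄` generated by all proper ideals of `F Q̄`. -/
def sumProperIdeals : TwoSidedIdeal (FQbar F L Q p) :=
  TwoSidedIdeal.span
    (⋃ J ∈ {J : TwoSidedIdeal (FQbar F L Q p) | (J : Set (FQbar F L Q p)) ≠ Set.univ},
      (J : Set (FQbar F L Q p)))

/-- The simple alternative algebra `F Q̿ = F Q̄/S`. -/
def FQbarbar : Type (max u v) := (sumProperIdeals F L Q p).ringCon.Quotient

noncomputable instance : NonAssocRing (FQbarbar F L Q p) :=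
  inferInstanceAs (NonAssocRing (sumProperIdeals F L Q p).ringCon.Quotient)

noncomputable instance : SMul F (FQbarbar F L Q p) :=
  inferInstanceAs (SMul F (sumProperIdeals F L Q p).ringCon.Quotient)

instance : IsScalarTower F (FQbarbar F L Q p) (FQbarbar F L Q p) :=
  inferInstanceAs (IsScalarTower F (sumProperIdeals F L Q p).ringCon.Quotient
    (sumProperIdeals F L Q p).ringCon.Quotient)

/-- The canonical map from `L` to `F Q̿ = F Q̄/S`; the loop `Q̿` is its range. -/
def embQbb : L → FQbarbar F L Q p :=
  fun g => ((embQbar F L Q p g : FQbar F L Q p) : (sumProperIdeals F L Q p).ringCon.Quotient)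

end LoopAlgebra
section Alt
variable {A : Type u} [NonAssocRing A] (halt : IsAlternative A)
include halt

lemma linL (a c b : A) : a*(c*b) + c*(a*b) = (a*c)*b + (c*a)*b := by
  have h := (halt (a+c) b).1
  simp only [add_mul, mul_add] at h
  rw [(halt a b).1, (halt c b).1] at h
  linear_combination (norm := abel) h

lemma linR (a b c : A) : (a*b)*c + (a*c)*b = a*(b*c) + a*(c*b) := by
  have h := (halt (b+c) a).2
  simp only [add_mul, mul_add] at h
  rw [(halt b a).2, (halt c a).2] at h
  linear_combination (norm := abel) h

lemma flexi (a b : A) : (a*b)*a = a*(b*a) := by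
  have h := linL halt a b a
  linear_combination (norm := abel) -h - (halt a b).2

lemma linF (a b c : A) : (a*b)*c + (c*b)*a = a*(b*c) + c*(b*a) := by
  have h := flexi halt (a+c) b
  simp only [add_mul, mul_add] at h
  rw [flexi halt a b, flexi halt c b] at h
  linear_combination (norm := abel) h

end Alt

section Alt2
variable {A : Type u} [NonAssocRing A] (halt : IsAlternative A)
include halt

lemma leftMoufang (x y z : A) : ((x*y)*x)*z = x*(y*(x*z)) := by
  have e1 := linL halt x (x*y) z
  have e2 := linF halt x y (x*z)
  have e3 := linL halt y (x*z) x
  have e4 := linR halt (x*x) y z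
  rw [← (halt x y).1, ← (halt x z).1, ← (halt x (y*z)).1, ← (halt x (z*y)).1] at e4
  have e7 := congrArg (x * ·) (linR halt x y z)
  simp only [mul_add] at e7
  have e6 := linF halt x (x*z) y
  linear_combination (norm := abel) e2 + e3 + e6 + e7 - e1 - e4

lemma rightMoufangAux (x y z : A) : z*(x*(y*x)) = ((z*x)*y)*x := by
  have f1 := linR halt z (y*x) x
  have f2 := linF halt (z*x) y x
  have f3 := linR halt x (z*x) y
  have f4 := linL halt z y (x*x)
  rw [← (halt x y).2, ← (halt x z).2, ← (halt x (z*y)).2, ← (halt x (y*z)).2] at f4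
  have f6 := linF halt y (z*x) x
  have f7 := congrArg (· * x) (linL halt z y x)
  simp only [add_mul] at f7
  linear_combination (norm := abel) f3 + f7 - f1 - f2 - f4 - f6

lemma rightMoufang (x y z : A) : z*((x*y)*x) = ((z*x)*y)*x := by
  rw [flexi halt x y]; exact rightMoufangAux halt x y z

lemma middleMoufang (x y z : A) : (x*y)*(z*x) = (x*(y*z))*x := by
  have s1 := linL halt z (x*y) x
  have rm := rightMoufang halt x y z
  have t1 := linF halt y x z
  have t2 := linL halt x y z
  have q : z*(x*y) + (x*y)*z = (z*x)*y + x*(y*z) := by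
    linear_combination (norm := abel) -t1 - t2
  have qx := congrArg (· * x) q
  simp only [add_mul] at qx
  linear_combination (norm := abel) s1 - rm + qx

end Alt2

section Alt3
variable {A : Type u} [NonAssocRing A] (halt : IsAlternative A)
include halt

lemma ripEqLip {x y : A} (hxy : x*y = 1) (hyx : y*x = 1) (z : A) :
    (z*x)*y = y*(x*z) := by
  have h := linF halt y x z
  rw [hyx, hxy, one_mul, mul_one] at h
  linear_combination (norm := abel) h

lemma lip {x y : A} (hxy : x*y = 1) (hyx : y*x = 1) (z : A) : y*(x*z) = z := by
  have hxd : x*(y*(x*z)) = x*z := by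
    have h := leftMoufang halt x y z
    rw [hxy, one_mul] at h
    exact h.symm
  have hdy : (y*(x*z))*y = z*y := by
    have h := middleMoufang halt y x z
    rw [hyx, one_mul] at h
    exact h.symm
  have hdx : (y*(x*z))*x = z*x := by
    rw [← ripEqLip halt hxy hyx z]
    have h := rightMoufang halt x y z
    rw [hxy, one_mul] at h
    exact h.symm
  have key := linL halt x (y*(x*z) - z) y
  simp only [mul_sub, sub_mul] at key
  rw [hxd, hdy, hdx, hxy] at key
  simp only [mul_one] at key
  linear_combination (norm := abel) key

lemma rip {x y : A} (hxy : x*y = 1) (hyx : y*x = 1) (z : A) : (z*x)*y = z := by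
  rw [ripEqLip halt hxy hyx z]; exact lip halt hxy hyx z

lemma mulinvAux {x y x' y' : A} (hx1 : x*x' = 1) (hx2 : x'*x = 1)
    (hy1 : y*y' = 1) (hy2 : y'*y = 1) : (x*y)*(y'*x') = 1 := by
  have hB : (y'*(x'*x'))*x = y'*x' := by
    have h := linF halt y' (x'*x') x
    have h1 : x*(x'*x') = x' := lip halt hx2 hx1 x'
    have h2 : (x'*x')*x = x' := by
      rw [← (halt x' x).1, hx2, mul_one]
    have h3 : x*((x'*x')*y') = x'*y' := by
      rw [← (halt x' y').1]; exact lip halt hx2 hx1 (x'*y')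
    rw [h1, h2, h3] at h
    linear_combination (norm := abel) h
  have key := middleMoufang halt x y (y'*(x'*x'))
  rw [hB] at key
  have h4 : y*(y'*(x'*x')) = x'*x' := lip halt hy2 hy1 (x'*x')
  rw [h4] at key
  have h5 : x*(x'*x') = x' := lip halt hx2 hx1 x'
  rw [h5, hx2] at key
  exact key

lemma mulinv {x y x' y' : A} (hx1 : x*x' = 1) (hx2 : x'*x = 1)
    (hy1 : y*y' = 1) (hy2 : y'*y = 1) :
    (x*y)*(y'*x') = 1 ∧ (y'*x')*(x*y) = 1 :=
  ⟨mulinvAux halt hx1 hx2 hy1 hy2, mulinvAux halt hy2 hy1 hx2 hx1⟩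

end Alt3

/-- The set `U(A)` of all invertible elements of a unital alternative
algebra `A` forms a Moufang loop with respect to the multiplication of `A`:
it contains `1`, is closed under multiplication and inverses, multiplication on it is
cancellative, and it satisfies the Moufang identity. -/
theorem invertibles_form_moufang_loop
    (F : Type u) (A : Type u) [Field F] [NonAssocRing A] [Module F A]
    [SMulCommClass F A A] [IsScalarTower F A A] (halt : IsAlternative A) :
    (1 : A) ∈ invertibles A ∧
    (∀ x ∈ invertibles A, ∀ y ∈ invertibles A, x * y ∈ invertibles A) ∧
    (∀ x ∈ invertibles A, ∀ y ∈ invertibles A, ∀ z ∈ invertibles A,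
      x * y = x * z → y = z) ∧
    (∀ x ∈ invertibles A, ∀ y ∈ invertibles A, ∀ z ∈ invertibles A,
      y * x = z * x → y = z) ∧
    (∀ x ∈ invertibles A, ∃ y ∈ invertibles A, x * y = 1 ∧ y * x = 1) ∧
    (∀ x ∈ invertibles A, ∀ y ∈ invertibles A, ∀ z ∈ invertibles A,
      ((x * y) * x) * z = x * (y * (x * z))) := by
  refine ⟨⟨1, one_mul 1, one_mul 1⟩, ?_, ?_, ?_, ?_, ?_⟩
  · rintro x ⟨x', hx1, hx2⟩ y ⟨y', hy1, hy2⟩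
    exact ⟨y'*x', (mulinv halt hx1 hx2 hy1 hy2).1, (mulinv halt hx1 hx2 hy1 hy2).2⟩
  · rintro x ⟨x', hx1, hx2⟩ y - z - h
    rw [← lip halt hx1 hx2 y, h, lip halt hx1 hx2 z]
  · rintro x ⟨x', hx1, hx2⟩ y - z - h
    rw [← rip halt hx1 hx2 y, h, rip halt hx1 hx2 z]
  · rintro x ⟨x', hx1, hx2⟩
    exact ⟨x', ⟨x, hx2, hx1⟩, hx1, hx2⟩
  · rintro x - y - z -
    exact leftMoufang halt x y z
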